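/- arXiv:1202.1365 — 3 statements merged into one kernel-verified Lean document; each statement's English description precedes it below -/
import Mathlib

section
/- Let X and Y be locally compact second countable Hausdorff spaces, let φ_n : X → Y be a sequence of continuous maps converging uniformly on compact sets to a continuous map φ : X → Y, and suppose A_n → A in the Chabauty–Fell topology on C(X). If moreover the sequence (φ_n) is 'eventually proper' in the sense that for every compact K ⊆ Y there is a compact L ⊆ X with φ_n^{-1}(K) ⊆ L for all large n, then the closures of φ_n(A_n) converge to the closure of φ(A) in C(Y). -/
open Filter Topology Set Metric

/-- The Chabauty–Fell topology on the powerset of `X`. -/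
def ChabautyFell (X : Type*) [TopologicalSpace X] : TopologicalSpace (Set X) :=
  TopologicalSpace.generateFrom
    ({S | ∃ K : Set X, IsCompact K ∧ S = {A : Set X | A ∩ K = ∅}} ∪
     {S | ∃ U : Set X, IsOpen U ∧ S = {A : Set X | (A ∩ U).Nonempty}})

/-- pushing forward Chabauty–Fell convergent sequences of closed sets by a
sequence of continuous maps converging uniformly on compacts, which is eventually proper. -/
theorem stmt3 (X Y : Type*) [TopologicalSpace X] [LocallyCompactSpace X]
    [SecondCountableTopology X] [T2Space X]
    [MetricSpace Y] [LocallyCompactSpace Y] [SecondCountableTopology Y]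
    (φseq : ℕ → X → Y) (φ : X → Y)
    (hcont : ∀ n, Continuous (φseq n)) (hφ : Continuous φ)
    (hunif : ∀ K : Set X, IsCompact K → TendstoUniformlyOn (fun n => φseq n) φ atTop K)
    (A : ℕ → Set X) (hA : ∀ n, IsClosed (A n)) (L : Set X) (hL : IsClosed L)
    (hconv : Tendsto A atTop (@nhds _ (ChabautyFell X) L))
    (hproper : ∀ K : Set Y, IsCompact K → ∃ Lc : Set X, IsCompact Lc ∧
      ∀ᶠ n in atTop, (φseq n) ⁻¹' K ⊆ Lc) :
    Tendsto (fun n => closure ((φseq n) '' (A n)))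
      atTop (@nhds _ (ChabautyFell Y) (closure (φ '' L))) := by
  -- Helper: use hconv on a subbasic open set containing L.
  have key : ∀ S : Set (Set X),
      S ∈ ({S | ∃ K : Set X, IsCompact K ∧ S = {A : Set X | A ∩ K = ∅}} ∪
        {S | ∃ U : Set X, IsOpen U ∧ S = {A : Set X | (A ∩ U).Nonempty}}) → L ∈ S →
      ∀ᶠ n in atTop, A n ∈ S := by
    intro S hS hLS
    letI := ChabautyFell X
    have hopen : IsOpen S := TopologicalSpace.GenerateOpen.basic _ hS
    exact hconv (hopen.mem_nhds hLS)
  rw [ChabautyFell, TopologicalSpace.tendsto_nhds_generateFrom_iff]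
  rintro S (⟨K, hK, rfl⟩ | ⟨U, hU, rfl⟩) hLS
  · -- compact case
    simp only [mem_setOf_eq] at hLS
    -- find δ' > 0 with cthickening δ' K compact and disjoint from closure (φ '' L)
    obtain ⟨K3, hK3, hKK3⟩ := exists_compact_superset hK
    have hWopen : IsOpen (interior K3 ∩ (closure (φ '' L))ᶜ) :=
      isOpen_interior.inter (isClosed_closure).isOpen_compl
    have hKW : K ⊆ interior K3 ∩ (closure (φ '' L))ᶜ := by
      intro y hy
      refine ⟨hKK3 hy, fun hy' => ?_⟩
      have : y ∈ closure (φ '' L) ∩ K := ⟨hy', hy⟩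
      rw [hLS] at this
      exact this
    obtain ⟨δ, hδ, hδsub⟩ := hK.exists_cthickening_subset_open hWopen hKW
    set K2 := cthickening δ K with hK2def
    have hK2c : IsCompact K2 :=
      hK3.of_isClosed_subset isClosed_cthickening
        (fun y hy => interior_subset (hδsub hy).1)
    have hK2disj : K2 ∩ closure (φ '' L) = ∅ := by
      ext y; simp only [mem_inter_iff, mem_empty_iff_false, iff_false, not_and]
      exact fun hy => (hδsub hy).2
    obtain ⟨Lc, hLc, hLcev⟩ := hproper K2 hK2c
    -- C0 := Lc ∩ φ ⁻¹' K2 is compact and disjoint from L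
    set C0 := Lc ∩ φ ⁻¹' K2 with hC0def
    have hC0c : IsCompact C0 :=
      hLc.of_isClosed_subset (hLc.isClosed.inter (isClosed_cthickening.preimage hφ))
        inter_subset_left
    have hLC0 : L ∩ C0 = ∅ := by
      ext x
      simp only [mem_inter_iff, mem_empty_iff_false, iff_false, not_and]
      rintro hx ⟨-, hx2⟩
      have : φ x ∈ K2 ∩ closure (φ '' L) := ⟨hx2, subset_closure ⟨x, hx, rfl⟩⟩
      rw [hK2disj] at this
      exact this
    have hev1 : ∀ᶠ n in atTop, A n ∩ C0 = ∅ :=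
      key _ (Or.inl ⟨C0, hC0c, rfl⟩) hLC0
    have hev2 : ∀ᶠ n in atTop, ∀ x ∈ Lc, dist (φ x) (φseq n x) < δ / 2 :=
      (Metric.tendstoUniformlyOn_iff.1 (hunif Lc hLc)) (δ / 2) (half_pos hδ)
    filter_upwards [hev1, hev2, hLcev] with n h1 h2 h3
    -- show closure (φseq n '' A n) ∩ K = ∅
    have himg : φseq n '' (A n) ∩ thickening (δ / 2) K = ∅ := by
      ext y
      simp only [mem_inter_iff, mem_empty_iff_false, iff_false, not_and]
      rintro ⟨x, hx, rfl⟩ hy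
      -- φseq n x ∈ thickening (δ/2) K ⊆ K2, so x ∈ Lc
      have hyK2 : φseq n x ∈ K2 :=
        thickening_subset_cthickening_of_le (by linarith) _ hy
      have hxLc : x ∈ Lc := h3 hyK2
      -- then φ x ∈ K2 too, so x ∈ C0, contradiction
      obtain ⟨z, hz, hdz⟩ := mem_thickening_iff.1 hy
      have hφx : φ x ∈ thickening δ K := by
        refine mem_thickening_iff.2 ⟨z, hz, ?_⟩
        calc dist (φ x) z ≤ dist (φ x) (φseq n x) + dist (φseq n x) z := dist_triangle _ _ _
          _ < δ / 2 + δ / 2 := add_lt_add (h2 x hxLc) hdz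
          _ = δ := add_halves δ
      have : x ∈ A n ∩ C0 := ⟨hx, hxLc, thickening_subset_cthickening δ K hφx⟩
      rw [h1] at this
      exact this
    have hsub : closure (φseq n '' (A n)) ⊆ (thickening (δ / 2) K)ᶜ := by
      apply closure_minimal _ (isOpen_thickening.isClosed_compl)
      intro y hy hy'
      have : y ∈ φseq n '' (A n) ∩ thickening (δ / 2) K := ⟨hy, hy'⟩
      rw [himg] at this
      exact this
    show closure (φseq n '' A n) ∩ K = ∅
    ext y
    simp only [mem_inter_iff, mem_empty_iff_false, iff_false, not_and]
    intro hy hyK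
    exact hsub hy (self_subset_thickening (half_pos hδ) K hyK)
  · -- open case
    simp only [mem_setOf_eq] at hLS
    obtain ⟨y, hyc, hyU⟩ := hLS
    obtain ⟨x, hxL, hφxU⟩ : ∃ x ∈ L, φ x ∈ U := by
      obtain ⟨z, hz1, hz2⟩ := mem_closure_iff.1 hyc U hU hyU
      obtain ⟨x, hx, rfl⟩ := hz2
      exact ⟨x, hx, hz1⟩
    obtain ⟨ε, hε, hball⟩ := Metric.isOpen_iff.1 hU (φ x) hφxU
    obtain ⟨N, hN1, hN2⟩ := exists_compact_mem_nhds x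
    set V := interior N ∩ φ ⁻¹' (ball (φ x) (ε / 2)) with hVdef
    have hVopen : IsOpen V := isOpen_interior.inter ((isOpen_ball).preimage hφ)
    have hxV : x ∈ V := ⟨mem_interior_iff_mem_nhds.2 hN2, by
      simp [mem_ball, dist_self, half_pos hε]⟩
    have hev1 : ∀ᶠ n in atTop, (A n ∩ V).Nonempty :=
      key _ (Or.inr ⟨V, hVopen, rfl⟩) ⟨x, hxL, hxV⟩
    have hev2 : ∀ᶠ n in atTop, ∀ z ∈ N, dist (φ z) (φseq n z) < ε / 2 :=
      (Metric.tendstoUniformlyOn_iff.1 (hunif N hN1)) (ε / 2) (half_pos hε)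
    filter_upwards [hev1, hev2] with n h1 h2
    obtain ⟨z, hzA, hzV⟩ := h1
    refine ⟨φseq n z, subset_closure ⟨z, hzA, rfl⟩, hball ?_⟩
    have hzN : z ∈ N := interior_subset hzV.1
    calc dist (φseq n z) (φ x) ≤ dist (φseq n z) (φ z) + dist (φ z) (φ x) := dist_triangle _ _ _
      _ < ε / 2 + ε / 2 := by
          refine add_lt_add ?_ hzV.2
          rw [dist_comm]; exact h2 z hzN
      _ = ε := add_halves ε
end

section
/- Let g_n ∈ PSL(2, ℝ) be a sequence of hyperbolic elements whose translation lengths ℓ_n tend to 0, whose axes converge to a geodesic γ, and such that the elements g_n converge to the identity. Then, after passing to a subsequence, the geometric limit of the cyclic groups ⟨g_n⟩ is either the full one-parameter hyperbolic group with axis γ, or a discrete infinite cyclic group of hyperbolic elements with axis γ. -/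
open Matrix Filter Topology Set

noncomputable section

abbrev SL2R := Matrix.SpecialLinearGroup (Fin 2) ℝ
abbrev PSL2R := Matrix.ProjectiveSpecialLinearGroup (Fin 2) ℝ

instance : TopologicalSpace SL2R :=
  TopologicalSpace.induced (fun A => (A : Matrix (Fin 2) (Fin 2) ℝ)) inferInstance

instance : IsTopologicalGroup SL2R where
  continuous_mul := continuous_induced_rng.mpr <| by
    exact ((continuous_induced_dom.comp continuous_fst).matrix_mul
      (continuous_induced_dom.comp continuous_snd))
  continuous_inv := continuous_induced_rng.mpr <| by
    have : Continuous fun A : SL2R => ((A : Matrix (Fin 2) (Fin 2) ℝ)).adjugate :=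
      continuous_induced_dom.matrix_adjugate
    simpa [Matrix.SpecialLinearGroup.coe_inv]


/-- Whether a boundary point `p ∈ ℝ ∪ {∞}` is fixed by the Möbius transformation of `A`. -/
def bFixed (A : SL2R) (p : OnePoint ℝ) : Prop :=
  OnePoint.rec (A 1 0 = 0)
    (fun x => A 1 0 * x ^ 2 + (A 1 1 - A 0 0) * x - A 0 1 = 0) p

/-- The subgroup of `PSL(2, ℝ)` of elements fixing both boundary points `p` and `q`;
for `p ≠ q` this is exactly the full one-parameter hyperbolic group whose axis is the
geodesic `γ` with endpoints `p` and `q` (together with the identity). -/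
def Stab (p q : OnePoint ℝ) : Set PSL2R :=
  {x : PSL2R | ∃ A : SL2R, (QuotientGroup.mk A : PSL2R) = x ∧ bFixed A p ∧ bFixed A q}

/-!
A hyperbolic `g ∈ SL(2, ℝ)` fixing `p ≠ q` on the boundary lies, up to sign, on the one-parameter
group `s ↦ cosh s • 1 + sinh s • H`, where `H` is the involution with eigenvectors the homogeneous
coordinates of `p` (eigenvalue `1`) and of `q` (eigenvalue `-1`). So `gₙ = ± exp (tₙ Hₙ)` with
`2 cosh tₙ = |tr gₙ| → 2`, hence `tₙ → 0`, while `Hₙ → H` because the endpoints converge.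
The whole sequence `closure ⟨gₙ⟩` then converges to the full group `Stab p q`: each `exp (s H)`
is the limit of `gₙ ^ round (s / tₙ)`, and a compact set missing `Stab p q` eventually misses
`Stab pₙ qₙ ⊇ closure ⟨gₙ⟩`, since `{(p, q, x) | x ∈ Stab p q}` is closed.
-/

lemma tendsto_chabautyFell_of {X α : Type*} [TopologicalSpace X] {l : Filter α}
    {F : α → Set X} {L : Set X}
    (hK : ∀ K, IsCompact K → L ∩ K = ∅ → ∀ᶠ a in l, F a ∩ K = ∅)
    (hU : ∀ U, IsOpen U → (L ∩ U).Nonempty → ∀ᶠ a in l, (F a ∩ U).Nonempty) :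
    Tendsto F l (@nhds _ (ChabautyFell X) L) := by
  rw [ChabautyFell, TopologicalSpace.nhds_generateFrom]
  simp only [tendsto_iInf, tendsto_principal]
  rintro S ⟨hLS, ⟨K, hK', rfl⟩ | ⟨U, hU', rfl⟩⟩
  · exact hK K hK' hLS
  · exact hU U hU' hLS

lemma eventually_inter_eq_empty_of_isClosed {X Y α : Type*} [TopologicalSpace X]
    [TopologicalSpace Y] {R : Y → Set X} (hR : IsClosed {z : Y × X | z.2 ∈ R z.1}) {K : Set X}
    (hK : IsCompact K) {y : Y} (hy : R y ∩ K = ∅) {l : Filter α} {f : α → Y}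
    (hf : Tendsto f l (𝓝 y)) : ∀ᶠ a in l, R (f a) ∩ K = ∅ := by
  have : ∀ᶠ y' in 𝓝 y, ∀ x ∈ K, x ∉ R y' :=
    hK.eventually_forall_of_forall_eventually fun x hx =>
      hR.isOpen_compl.mem_nhds fun hxy => (eq_empty_iff_forall_notMem.1 hy) x ⟨hxy, hx⟩
  filter_upwards [hf.eventually this] with a ha
  exact eq_empty_iff_forall_notMem.2 fun x hx => ha x hx.2 hx.1

lemma tendsto_round_div_mul {α : Type*} {l : Filter α} {t : α → ℝ} (ht : Tendsto t l (𝓝 0))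
    (ht0 : ∀ a, t a ≠ 0) (s : ℝ) : Tendsto (fun a => (round (s / t a) : ℝ) * t a) l (𝓝 s) := by
  have hbound (a : α) : |(round (s / t a) : ℝ) * t a - s| ≤ |t a| := by
    calc |(round (s / t a) : ℝ) * t a - s| = |t a| * |round (s / t a) - s / t a| := by
          rw [← abs_mul, mul_sub, mul_div_cancel₀ s (ht0 a), mul_comm]
      _ ≤ |t a| * (1 / 2) := by
          gcongr
          rw [abs_sub_comm]
          exact abs_sub_round _
      _ ≤ |t a| := by linarith [abs_nonneg (t a)]
  have := (squeeze_zero_norm hbound ((tendsto_zero_iff_abs_tendsto_zero _).1 ht)).add_const s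
  simpa using this

lemma tendsto_zero_of_tendsto_cosh {α : Type*} {l : Filter α} {t : α → ℝ}
    (h : Tendsto (fun a => Real.cosh (t a)) l (𝓝 1)) : Tendsto t l (𝓝 0) := by
  rw [tendsto_zero_iff_abs_tendsto_zero]
  have h' : Tendsto (fun a => Real.cosh (t a)) l (𝓝[Ici 1] 1) :=
    tendsto_nhdsWithin_iff.2 ⟨h, Eventually.of_forall fun a => Real.one_le_cosh _⟩
  have := ((Real.continuousOn_arcosh 1 self_mem_Ici).tendsto).comp h'
  rw [Real.arcosh_zero] at this
  refine this.congr fun a => ?_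
  simp only [Function.comp_apply, ← Real.cosh_abs (t a), Real.arcosh_cosh (abs_nonneg _)]

local notation "M₂" => Matrix (Fin 2) (Fin 2) ℝ

namespace HyperbolicAxis

def wedge (v w : Fin 2 → ℝ) : ℝ := v 0 * w 1 - v 1 * w 0

-- The matrix of `u ↦ (wedge u w • v + wedge u v • w) / wedge v w`.
def eigenInvolution (v w : Fin 2 → ℝ) : M₂ :=
  (wedge v w)⁻¹ •
    !![v 0 * w 1 + v 1 * w 0, -2 * v 0 * w 0; 2 * v 1 * w 1, -(v 0 * w 1 + v 1 * w 0)]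

section eigenInvolution

variable {v w : Fin 2 → ℝ}

lemma eigenInvolution_mulVec_left (h : wedge v w ≠ 0) : eigenInvolution v w *ᵥ v = v := by
  unfold wedge at h
  ext i
  fin_cases i <;> simp [eigenInvolution, wedge, Matrix.mulVec, dotProduct] <;> field_simp <;> ring

lemma eigenInvolution_mulVec_right (h : wedge v w ≠ 0) : eigenInvolution v w *ᵥ w = -w := by
  unfold wedge at h
  ext i
  fin_cases i <;> simp [eigenInvolution, wedge, Matrix.mulVec, dotProduct] <;> field_simp <;> ring

lemma trace_eigenInvolution : (eigenInvolution v w).trace = 0 := by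
  simp [eigenInvolution, Matrix.trace_fin_two]
  ring

lemma det_eigenInvolution (h : wedge v w ≠ 0) : (eigenInvolution v w).det = -1 := by
  unfold wedge at h
  simp [eigenInvolution, Matrix.det_fin_two, wedge]
  field_simp
  ring

lemma eigenInvolution_mul_self (h : wedge v w ≠ 0) :
    eigenInvolution v w * eigenInvolution v w = 1 := by
  unfold wedge at h
  ext i j
  fin_cases i <;> fin_cases j <;> simp [eigenInvolution, wedge, Matrix.mul_apply] <;>
    field_simp <;> ring

lemma eigenInvolution_smul_smul {c d : ℝ} (hc : c ≠ 0) (hd : d ≠ 0) :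
    eigenInvolution (c • v) (d • w) = eigenInvolution v w := by
  ext i j
  fin_cases i <;> fin_cases j <;> simp [eigenInvolution, wedge] <;> field_simp

lemma eq_smul_eigenInvolution {N : M₂} (htr : N.trace = 0) (hv : wedge (N *ᵥ v) v = 0)
    (hw : wedge (N *ᵥ w) w = 0) (h : wedge v w ≠ 0) :
    N = (wedge (N *ᵥ v) w / wedge v w) • eigenInvolution v w := by
  rw [Matrix.trace_fin_two, add_eq_zero_iff_eq_neg'] at htr
  simp only [wedge, Matrix.mulVec, dotProduct, Fin.sum_univ_two, htr] at hv hw h ⊢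
  ext i j
  fin_cases i <;> fin_cases j <;> simp [eigenInvolution, wedge, htr] <;> field_simp
  · linear_combination (-w 0 * w 1) * hv + (-v 0 * v 1) * hw
  · linear_combination (w 0 ^ 2) * hv + (v 0 ^ 2) * hw
  · linear_combination (-w 1 ^ 2) * hv + (-v 1 ^ 2) * hw
  · linear_combination (w 0 * w 1) * hv + (v 0 * v 1) * hw

lemma continuousAt_eigenInvolution (h : wedge v w ≠ 0) :
    ContinuousAt (fun z : (Fin 2 → ℝ) × (Fin 2 → ℝ) => eigenInvolution z.1 z.2) (v, w) := by
  unfold eigenInvolution wedge at *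
  fun_prop (disch := exact h)

end eigenInvolution

def homVec (p : OnePoint ℝ) : Fin 2 → ℝ := OnePoint.rec ![1, 0] (fun x => ![x, 1]) p

@[simp] lemma homVec_infty : homVec OnePoint.infty = ![1, 0] := rfl

@[simp] lemma homVec_coe (x : ℝ) : homVec x = ![x, 1] := rfl

lemma wedge_homVec_ne_zero {p q : OnePoint ℝ} (hpq : p ≠ q) :
    wedge (homVec p) (homVec q) ≠ 0 := by
  induction p using OnePoint.rec <;> induction q using OnePoint.rec <;>
    simp_all [wedge, sub_eq_zero]

-- `homVec` itself is discontinuous at `∞`.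
lemma exists_homVec_lift (p₀ : OnePoint ℝ) : ∃ v : OnePoint ℝ → Fin 2 → ℝ,
    ContinuousAt v p₀ ∧ v p₀ = homVec p₀ ∧
      ∀ᶠ p in 𝓝 p₀, ∃ c : ℝ, c ≠ 0 ∧ homVec p = c • v p := by
  induction p₀ using OnePoint.rec with
  | infty =>
    refine ⟨fun p => ![1, p.elim 0 (·⁻¹)], ?_, by simp, ?_⟩
    · refine ContinuousAt.comp (g := fun y : ℝ => ![1, y]) (by fun_prop) ?_
      rw [OnePoint.continuousAt_infty', coclosedCompact_eq_cocompact,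
        ← Metric.cobounded_eq_cocompact]
      exact tendsto_inv₀_cobounded
    · filter_upwards [compl_singleton_mem_nhds (OnePoint.infty_ne_coe (0 : ℝ))] with p hp
      induction p using OnePoint.rec with
      | infty => exact ⟨1, one_ne_zero, by simp⟩
      | coe x =>
        have hx : x ≠ 0 := by rintro rfl; exact hp rfl
        exact ⟨x, hx, by ext i; fin_cases i <;> simp [hx]⟩
  | coe x₀ =>
    refine ⟨fun p => ![p.elim 0 id, 1], ?_, rfl, ?_⟩
    · refine ContinuousAt.comp (g := fun y : ℝ => ![y, 1]) (by fun_prop) ?_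
      rw [OnePoint.continuousAt_coe]
      exact continuousAt_id
    · filter_upwards [OnePoint.isOpen_range_coe.mem_nhds (mem_range_self x₀)]
      rintro _ ⟨x, rfl⟩
      exact ⟨1, one_ne_zero, by simp⟩

-- `fixForm p M = 0` iff `homVec p` is an eigenvector of `M`, i.e. the Möbius map of `M` fixes `p`.
def fixForm (p : OnePoint ℝ) : M₂ →ₗ[ℝ] ℝ where
  toFun M := wedge (M *ᵥ homVec p) (homVec p)
  map_add' M N := by
    simp only [Matrix.add_mulVec, wedge, Pi.add_apply]
    ring
  map_smul' c M := by
    simp only [Matrix.smul_mulVec, wedge, Pi.smul_apply, smul_eq_mul, RingHom.id_apply]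
    ring

lemma fixForm_apply (p : OnePoint ℝ) (M : M₂) :
    fixForm p M = wedge (M *ᵥ homVec p) (homVec p) :=
  rfl

lemma bFixed_iff_fixForm (A : SL2R) (p : OnePoint ℝ) : bFixed A p ↔ fixForm p A = 0 := by
  induction p using OnePoint.rec with
  | infty =>
    change A 1 0 = 0 ↔ _
    simp [fixForm_apply, wedge, Matrix.mulVec, dotProduct]
  | coe x =>
    change A 1 0 * x ^ 2 + (A 1 1 - A 0 0) * x - A 0 1 = 0 ↔ _
    simp [fixForm_apply, wedge, Matrix.mulVec, dotProduct]
    constructor <;> intro h <;> linear_combination -h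

lemma fixForm_one (p : OnePoint ℝ) : fixForm p 1 = 0 := by
  rw [fixForm_apply, Matrix.one_mulVec, wedge]
  ring

lemma fixForm_eq_of_homVec_eq_smul {p : OnePoint ℝ} {c : ℝ} {u : Fin 2 → ℝ}
    (h : homVec p = c • u) (M : M₂) : fixForm p M = c ^ 2 * wedge (M *ᵥ u) u := by
  simp only [fixForm_apply, h, Matrix.mulVec_smul, wedge, Pi.smul_apply, smul_eq_mul]
  ring

lemma isClosed_setOf_fixForm_eq_zero :
    IsClosed {z : M₂ × OnePoint ℝ | fixForm z.2 z.1 = 0} := by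
  rw [← isOpen_compl_iff, isOpen_iff_eventually]
  rintro ⟨M₀, p₀⟩ h
  obtain ⟨v, hv, hvp, hv_lift⟩ := exists_homVec_lift p₀
  have hwedge : Continuous fun y : M₂ × (Fin 2 → ℝ) => wedge (y.1 *ᵥ y.2) y.2 := by
    simp only [wedge, Matrix.mulVec, dotProduct, Fin.sum_univ_two]
    fun_prop
  have hcont :
      ContinuousAt (fun z : M₂ × OnePoint ℝ => wedge (z.1 *ᵥ v z.2) (v z.2)) (M₀, p₀) :=
    hwedge.continuousAt.comp (f := fun z : M₂ × OnePoint ℝ => (z.1, v z.2))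
      (continuousAt_fst.prodMk (hv.comp continuousAt_snd))
  have hne : wedge (M₀ *ᵥ v p₀) (v p₀) ≠ 0 := by simpa [fixForm_apply, hvp] using h
  filter_upwards [hcont.eventually_ne hne, hv_lift.prod_inr_nhds M₀] with z hz ⟨c, hc, hcz⟩
  change fixForm z.2 z.1 ≠ 0
  rw [fixForm_eq_of_homVec_eq_smul hcz]
  exact mul_ne_zero (pow_ne_zero 2 hc) hz

def axisInvolution (p q : OnePoint ℝ) : M₂ := eigenInvolution (homVec p) (homVec q)

section axisInvolution

variable {p q : OnePoint ℝ}

lemma fixForm_axisInvolution_left (hpq : p ≠ q) : fixForm p (axisInvolution p q) = 0 := by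
  rw [fixForm_apply, axisInvolution, eigenInvolution_mulVec_left (wedge_homVec_ne_zero hpq),
    wedge]
  ring

lemma fixForm_axisInvolution_right (hpq : p ≠ q) : fixForm q (axisInvolution p q) = 0 := by
  rw [fixForm_apply, axisInvolution, eigenInvolution_mulVec_right (wedge_homVec_ne_zero hpq),
    wedge]
  simp only [Pi.neg_apply]
  ring

lemma eq_smul_axisInvolution {N : M₂} (htr : N.trace = 0) (hp : fixForm p N = 0)
    (hq : fixForm q N = 0) (hpq : p ≠ q) : ∃ b : ℝ, N = b • axisInvolution p q :=
  ⟨_, eq_smul_eigenInvolution htr hp hq (wedge_homVec_ne_zero hpq)⟩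

lemma continuousAt_axisInvolution (hpq : p ≠ q) :
    ContinuousAt (fun z : OnePoint ℝ × OnePoint ℝ => axisInvolution z.1 z.2) (p, q) := by
  obtain ⟨v, hv, hvp, hv_lift⟩ := exists_homVec_lift p
  obtain ⟨w, hw, hwq, hw_lift⟩ := exists_homVec_lift q
  have hvw : wedge (v p) (w q) ≠ 0 := hvp ▸ hwq ▸ wedge_homVec_ne_zero hpq
  refine ((continuousAt_eigenInvolution hvw).comp (f := fun z => (v z.1, w z.2))
    ((hv.comp continuousAt_fst).prodMk (hw.comp continuousAt_snd))).congr ?_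
  filter_upwards [hv_lift.prod_nhds hw_lift] with z ⟨⟨c, hc, hvz⟩, ⟨d, hd, hwz⟩⟩
  simp [axisInvolution, hvz, hwz, eigenInvolution_smul_smul hc hd]

end axisInvolution

lemma det_smul_one_add_smul (a b : ℝ) (H : M₂) :
    (a • 1 + b • H).det = a ^ 2 + a * b * H.trace + b ^ 2 * H.det := by
  simp [Matrix.det_fin_two, Matrix.trace_fin_two]
  ring

section hypFlow

variable {p q : OnePoint ℝ}

-- `exp (s • axisInvolution p q)`, as `axisInvolution p q` squares to `1`.
def hypFlow (hpq : p ≠ q) (s : ℝ) : SL2R :=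
  ⟨Real.cosh s • 1 + Real.sinh s • axisInvolution p q, by
    rw [det_smul_one_add_smul, axisInvolution, trace_eigenInvolution,
      det_eigenInvolution (wedge_homVec_ne_zero hpq)]
    linear_combination Real.cosh_sq_sub_sinh_sq s⟩

lemma coe_hypFlow (hpq : p ≠ q) (s : ℝ) :
    (hypFlow hpq s : M₂) = Real.cosh s • 1 + Real.sinh s • axisInvolution p q :=
  rfl

lemma hypFlow_add (hpq : p ≠ q) (s t : ℝ) :
    hypFlow hpq (s + t) = hypFlow hpq s * hypFlow hpq t := by
  have hsq : axisInvolution p q * axisInvolution p q = 1 :=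
    eigenInvolution_mul_self (wedge_homVec_ne_zero hpq)
  apply Subtype.ext
  simp only [Matrix.SpecialLinearGroup.coe_mul, coe_hypFlow, Real.cosh_add, Real.sinh_add,
    Matrix.add_mul, Matrix.mul_add, Matrix.smul_mul, Matrix.mul_smul, hsq, Matrix.one_mul,
    Matrix.mul_one]
  module

lemma hypFlow_intCast_mul (hpq : p ≠ q) (k : ℤ) (t : ℝ) :
    hypFlow hpq (k * t) = hypFlow hpq t ^ k := by
  let φ : Multiplicative ℝ →* SL2R :=
    MonoidHom.mk' (fun s => hypFlow hpq s.toAdd) (fun s t => hypFlow_add hpq s.toAdd t.toAdd)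
  simpa [φ, zsmul_eq_mul] using map_zpow φ (Multiplicative.ofAdd t) k

lemma trace_hypFlow (hpq : p ≠ q) (s : ℝ) :
    hypFlow hpq s 0 0 + hypFlow hpq s 1 1 = 2 * Real.cosh s := by
  rw [← Matrix.trace_fin_two, coe_hypFlow, Matrix.trace_add, Matrix.trace_smul,
    Matrix.trace_smul, axisInvolution, trace_eigenInvolution]
  simp [mul_comm]

lemma fixForm_hypFlow_left (hpq : p ≠ q) (s : ℝ) : fixForm p (hypFlow hpq s) = 0 := by
  simp [coe_hypFlow, fixForm_one, fixForm_axisInvolution_left hpq]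

lemma fixForm_hypFlow_right (hpq : p ≠ q) (s : ℝ) : fixForm q (hypFlow hpq s) = 0 := by
  simp [coe_hypFlow, fixForm_one, fixForm_axisInvolution_right hpq]

lemma eq_hypFlow_of_fixForm (hpq : p ≠ q) (C : SL2R) (htr : 0 ≤ (C : M₂).trace)
    (hp : fixForm p C = 0) (hq : fixForm q C = 0) : ∃ s, C = hypFlow hpq s := by
  set a := (C : M₂).trace / 2
  obtain ⟨b, hb⟩ : ∃ b : ℝ, (C : M₂) - a • 1 = b • axisInvolution p q := by
    refine eq_smul_axisInvolution ?_ ?_ ?_ hpq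
    · simp [a]
    · simp [hp, fixForm_one]
    · simp [hq, fixForm_one]
  have hC : (C : M₂) = a • 1 + b • axisInvolution p q := by rw [← hb, add_sub_cancel]
  have hdet : a ^ 2 - b ^ 2 = 1 := by
    have := C.prop
    rw [hC, det_smul_one_add_smul, axisInvolution, trace_eigenInvolution,
      det_eigenInvolution (wedge_homVec_ne_zero hpq)] at this
    linear_combination this
  refine ⟨Real.arsinh b, Subtype.ext ?_⟩
  rw [coe_hypFlow, Real.sinh_arsinh, Real.cosh_arsinh, hC,
    show 1 + b ^ 2 = a ^ 2 by linear_combination -hdet, Real.sqrt_sq (by positivity)]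

end hypFlow

lemma mk_neg (C : SL2R) : (QuotientGroup.mk (-C) : PSL2R) = QuotientGroup.mk C := by
  refine QuotientGroup.eq.2 (Subgroup.mem_center_iff.2 fun g => ?_)
  simp

lemma eq_or_eq_neg_of_mk_eq {C D : SL2R}
    (h : (QuotientGroup.mk C : PSL2R) = QuotientGroup.mk D) : D = C ∨ D = -C := by
  obtain ⟨r, hr2, hr⟩ := Matrix.SpecialLinearGroup.mem_center_iff.1 (QuotientGroup.eq.1 h)
  have hD : (D : M₂) = r • (C : M₂) := by
    rw [← mul_inv_cancel_left C D, Matrix.SpecialLinearGroup.coe_mul C, ← hr,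
      Matrix.scalar_apply, ← Matrix.smul_one_eq_diagonal, Matrix.mul_smul, Matrix.mul_one]
  rcases mul_self_eq_one_iff.1 (by simpa [sq] using hr2) with rfl | rfl
  · exact Or.inl (Subtype.ext (by simpa using hD))
  · exact Or.inr (Subtype.ext (by simpa using hD))

section Stab

variable {p q : OnePoint ℝ}

lemma mk_mem_Stab_iff (C : SL2R) :
    (QuotientGroup.mk C : PSL2R) ∈ Stab p q ↔ fixForm p C = 0 ∧ fixForm q C = 0 := by
  constructor
  · rintro ⟨D, hD, hp, hq⟩
    rw [bFixed_iff_fixForm] at hp hq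
    rcases eq_or_eq_neg_of_mk_eq hD with rfl | rfl
    · exact ⟨hp, hq⟩
    · simpa using And.intro hp hq
  · rintro ⟨hp, hq⟩
    exact ⟨C, rfl, (bFixed_iff_fixForm C p).2 hp, (bFixed_iff_fixForm C q).2 hq⟩

lemma exists_mk_eq_mk_hypFlow (hpq : p ≠ q) (C : SL2R) (hp : fixForm p C = 0)
    (hq : fixForm q C = 0) :
    ∃ s, (QuotientGroup.mk C : PSL2R) = QuotientGroup.mk (hypFlow hpq s) ∧
      2 * Real.cosh s = |C 0 0 + C 1 1| := by
  rcases le_total 0 (C : M₂).trace with htr | htr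
  · obtain ⟨s, rfl⟩ := eq_hypFlow_of_fixForm hpq C htr hp hq
    exact ⟨s, rfl, by rw [trace_hypFlow, abs_of_nonneg (by positivity)]⟩
  · obtain ⟨s, hs⟩ := eq_hypFlow_of_fixForm hpq (-C) (by simpa using htr) (by simpa using hp)
      (by simpa using hq)
    refine ⟨s, by rw [← hs, mk_neg], ?_⟩
    rw [← trace_hypFlow hpq s, ← hs, ← abs_neg, abs_of_nonneg]
    · simp only [Matrix.SpecialLinearGroup.coe_neg, Matrix.neg_apply, neg_add]
    · rw [Matrix.trace_fin_two] at htr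
      linarith

lemma exists_mk_hypFlow_eq_of_mem_Stab (hpq : p ≠ q) {x : PSL2R} (hx : x ∈ Stab p q) :
    ∃ s, (QuotientGroup.mk (hypFlow hpq s) : PSL2R) = x := by
  obtain ⟨C, rfl, hp, hq⟩ := hx
  obtain ⟨s, hs, -⟩ := exists_mk_eq_mk_hypFlow hpq C ((bFixed_iff_fixForm C p).1 hp)
    ((bFixed_iff_fixForm C q).1 hq)
  exact ⟨s, hs.symm⟩

lemma mk_hypFlow_mem_Stab (hpq : p ≠ q) (s : ℝ) :
    (QuotientGroup.mk (hypFlow hpq s) : PSL2R) ∈ Stab p q :=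
  (mk_mem_Stab_iff _).2 ⟨fixForm_hypFlow_left hpq s, fixForm_hypFlow_right hpq s⟩

end Stab

lemma isClosed_setOf_mem_Stab :
    IsClosed {z : (OnePoint ℝ × OnePoint ℝ) × PSL2R | z.2 ∈ Stab z.1.1 z.1.2} := by
  have hmk : IsOpenQuotientMap (Prod.map id QuotientGroup.mk :
      (OnePoint ℝ × OnePoint ℝ) × SL2R → (OnePoint ℝ × OnePoint ℝ) × PSL2R) :=
    IsOpenQuotientMap.id.prodMap QuotientGroup.isOpenQuotientMap_mk
  have hfixed (π : OnePoint ℝ × OnePoint ℝ → OnePoint ℝ) (hπ : Continuous π) :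
      IsClosed {z : (OnePoint ℝ × OnePoint ℝ) × SL2R | fixForm (π z.1) z.2 = 0} :=
    isClosed_setOf_fixForm_eq_zero.preimage
      (f := fun z : (OnePoint ℝ × OnePoint ℝ) × SL2R => ((z.2 : M₂), π z.1)) (by fun_prop)
  rw [← hmk.isQuotientMap.isClosed_preimage]
  simp only [preimage_ofPred_eq, Prod.map_fst, Prod.map_snd, id_eq, mk_mem_Stab_iff]
  exact (hfixed Prod.fst continuous_fst).inter (hfixed Prod.snd continuous_snd)

lemma isClosed_Stab (p q : OnePoint ℝ) : IsClosed (Stab p q) :=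
  isClosed_setOf_mem_Stab.preimage (f := fun x => ((p, q), x)) (by fun_prop)

lemma tendsto_abs_trace {α : Type*} {l : Filter α} {A : α → SL2R}
    (hA : Tendsto (fun a => (QuotientGroup.mk (A a) : PSL2R)) l (𝓝 1)) :
    Tendsto (fun a => |A a 0 0 + A a 1 1|) l (𝓝 2) := by
  let f : PSL2R → ℝ := Quotient.lift (fun C : SL2R => |C 0 0 + C 1 1|) fun C D h => by
    rcases eq_or_eq_neg_of_mk_eq (Quotient.sound h) with rfl | rfl
    · rfl
    · simp only [Matrix.SpecialLinearGroup.coe_neg, Matrix.neg_apply, ← neg_add, abs_neg]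
  have hf : Continuous f := QuotientGroup.isOpenQuotientMap_mk.isQuotientMap.continuous_iff.2
    (by simp only [f]; fun_prop)
  have hf1 : f 1 = 2 := by
    change |((1 : SL2R) : M₂) 0 0 + ((1 : SL2R) : M₂) 1 1| = 2
    norm_num
  exact hf1 ▸ (hf.tendsto 1).comp hA

lemma tendsto_hypFlow {α : Type*} {l : Filter α} {p_ q_ : α → OnePoint ℝ} {p q : OnePoint ℝ}
    {s_ : α → ℝ} {s : ℝ} (hpq_ : ∀ a, p_ a ≠ q_ a) (hpq : p ≠ q) (hp : Tendsto p_ l (𝓝 p))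
    (hq : Tendsto q_ l (𝓝 q)) (hs : Tendsto s_ l (𝓝 s)) :
    Tendsto (fun a => hypFlow (hpq_ a) (s_ a)) l (𝓝 (hypFlow hpq s)) := by
  rw [(Topology.IsInducing.induced (fun C : SL2R => (C : M₂))).tendsto_nhds_iff]
  have hH := (continuousAt_axisInvolution hpq).tendsto.comp (hp.prodMk_nhds hq)
  exact ((Real.continuous_cosh.tendsto s).comp hs).smul_const 1 |>.add
    (((Real.continuous_sinh.tendsto s).comp hs).smul hH)

lemma tendsto_closure_zpowers_mk_hypFlow {α : Type*} {l : Filter α} {p_ q_ : α → OnePoint ℝ}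
    {p q : OnePoint ℝ} (hpq_ : ∀ a, p_ a ≠ q_ a) (hpq : p ≠ q) (hp : Tendsto p_ l (𝓝 p))
    (hq : Tendsto q_ l (𝓝 q)) {t : α → ℝ} (ht0 : ∀ a, t a ≠ 0) (ht : Tendsto t l (𝓝 0)) :
    Tendsto (fun a => closure ((Subgroup.zpowers (QuotientGroup.mk (hypFlow (hpq_ a) (t a))
      : PSL2R) : Subgroup PSL2R) : Set PSL2R)) l (@nhds _ (ChabautyFell PSL2R) (Stab p q)) := by
  have hpow a (k : ℤ) : (QuotientGroup.mk (hypFlow (hpq_ a) (t a)) : PSL2R) ^ k =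
      QuotientGroup.mk (hypFlow (hpq_ a) (k * t a)) := by
    rw [← QuotientGroup.mk_zpow, hypFlow_intCast_mul]
  refine tendsto_chabautyFell_of (fun K hK hKL => ?_) fun U hU ⟨x, hxL, hxU⟩ => ?_
  · have hsub a : closure ((Subgroup.zpowers (QuotientGroup.mk (hypFlow (hpq_ a) (t a))
        : PSL2R) : Subgroup PSL2R) : Set PSL2R) ⊆ Stab (p_ a) (q_ a) := by
      refine closure_minimal ?_ (isClosed_Stab _ _)
      rintro _ ⟨k, rfl⟩
      simpa only [hpow] using mk_hypFlow_mem_Stab (hpq_ a) _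
    filter_upwards [eventually_inter_eq_empty_of_isClosed (R := fun y => Stab y.1 y.2)
      isClosed_setOf_mem_Stab hK hKL (hp.prodMk_nhds hq)] with a ha
    exact subset_eq_empty (inter_subset_inter_left K (hsub a)) ha
  · obtain ⟨s, rfl⟩ := exists_mk_hypFlow_eq_of_mem_Stab hpq hxL
    have hlim : Tendsto (fun a => (QuotientGroup.mk (hypFlow (hpq_ a) (round (s / t a) * t a))
        : PSL2R)) l (𝓝 (QuotientGroup.mk (hypFlow hpq s))) :=
      (QuotientGroup.continuous_mk.tendsto _).comp
        (tendsto_hypFlow hpq_ hpq hp hq (tendsto_round_div_mul ht ht0 s))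
    filter_upwards [hlim.eventually (hU.mem_nhds hxU)] with a ha
    exact ⟨_, subset_closure ⟨round (s / t a), hpow a _⟩, ha⟩

end HyperbolicAxis

open HyperbolicAxis in
theorem stmt9_general (A : ℕ → SL2R) (hhyp : ∀ n, 2 < |A n 0 0 + A n 1 1|)
    (p_ q_ : ℕ → OnePoint ℝ) (p q : OnePoint ℝ) (hpq : p ≠ q)
    (hfix : ∀ n, bFixed (A n) (p_ n) ∧ bFixed (A n) (q_ n) ∧ p_ n ≠ q_ n)
    (hp : Tendsto p_ atTop (nhds p)) (hq : Tendsto q_ atTop (nhds q))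
    (hid : Tendsto (fun n => (QuotientGroup.mk (A n) : PSL2R)) atTop (nhds 1)) :
    ∃ φ : ℕ → ℕ, StrictMono φ ∧ ∃ L : Set PSL2R, IsClosed L ∧
      Tendsto (fun k => closure ((Subgroup.zpowers (QuotientGroup.mk (A (φ k)) : PSL2R)
          : Subgroup PSL2R) : Set PSL2R)) atTop (@nhds _ (ChabautyFell PSL2R) L) ∧
      (L = Stab p q ∨
        ∃ B : SL2R, 2 < |B 0 0 + B 1 1| ∧ bFixed B p ∧ bFixed B q ∧
          L = ((Subgroup.zpowers (QuotientGroup.mk B : PSL2R) : Subgroup PSL2R) : Set PSL2R) ∧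
          DiscreteTopology L ∧ L.Infinite) := by
  have hpq_ n := (hfix n).2.2
  choose t hAt htr using fun n => exists_mk_eq_mk_hypFlow (hpq_ n) (A n)
    ((bFixed_iff_fixForm _ _).1 (hfix n).1) ((bFixed_iff_fixForm _ _).1 (hfix n).2.1)
  have ht0 n : t n ≠ 0 := fun h => by simpa [← htr n, h] using hhyp n
  have ht : Tendsto t atTop (𝓝 0) := tendsto_zero_of_tendsto_cosh <| by
    simpa [← htr] using (tendsto_abs_trace hid).div_const 2
  refine ⟨id, strictMono_id, Stab p q, isClosed_Stab p q, ?_, Or.inl rfl⟩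
  simpa only [id, hAt] using tendsto_closure_zpowers_mk_hypFlow hpq_ hpq hp hq ht0 ht

/-- hyperbolic elements with translation lengths tending to `0`, axes
converging to the geodesic `γ` with endpoints `p ≠ q`, and converging to the identity:
after passing to a subsequence, the geometric limit of `⟨gₙ⟩` is either the full
one-parameter hyperbolic group with axis `γ`, or a discrete infinite cyclic group of
hyperbolic elements with axis `γ`. -/
theorem stmt9 (A : ℕ → SL2R) (hhyp : ∀ n, 2 < |A n 0 0 + A n 1 1|)
    (hlen : Tendsto (fun n => ⨅ z : UpperHalfPlane, dist z ((A n) • z)) atTop (nhds 0))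
    (p_ q_ : ℕ → OnePoint ℝ) (p q : OnePoint ℝ) (hpq : p ≠ q)
    (hfix : ∀ n, bFixed (A n) (p_ n) ∧ bFixed (A n) (q_ n) ∧ p_ n ≠ q_ n)
    (hp : Tendsto p_ atTop (nhds p)) (hq : Tendsto q_ atTop (nhds q))
    (hid : Tendsto (fun n => (QuotientGroup.mk (A n) : PSL2R)) atTop (nhds 1)) :
    ∃ φ : ℕ → ℕ, StrictMono φ ∧ ∃ L : Set PSL2R, IsClosed L ∧
      Tendsto (fun k => closure ((Subgroup.zpowers (QuotientGroup.mk (A (φ k)) : PSL2R)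
          : Subgroup PSL2R) : Set PSL2R)) atTop (@nhds _ (ChabautyFell PSL2R) L) ∧
      (L = Stab p q ∨
        ∃ B : SL2R, 2 < |B 0 0 + B 1 1| ∧ bFixed B p ∧ bFixed B q ∧
          L = ((Subgroup.zpowers (QuotientGroup.mk B : PSL2R) : Subgroup PSL2R) : Set PSL2R) ∧
          DiscreteTopology L ∧ L.Infinite) :=
  stmt9_general A hhyp p_ q_ p q hpq hfix hp hq hid
end
end

section
/- The space of closed subgroups of ℝ with the Chabauty topology is homeomorphic to a closed interval: it consists of {0}, the groups aℤ for a > 0, and ℝ itself, with aℤ → ℝ as a → 0⁺ and aℤ → {0} as a → +∞. -/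
/-!
By the Archimedean property a subgroup of `ℝ` is dense or cyclic, so the closed ones are `{0}`,
`aℤ` with `a > 0`, and `ℝ`. The map `t ↦ ((1 - t) / t)ℤ` on `[0, 1)`, extended by `ℝ` at `t = 1`,
is a continuous bijection from `[0, 1]` onto the Chabauty space, which is Hausdorff because `ℝ`
is locally compact; a continuous bijection from a compact space onto a Hausdorff one is a
homeomorphism. Continuity comes from three limits: `bℤ → aℤ` as `b → a ≠ 0`, `bℤ → {0}` as
`|b| → ∞`, and `bℤ → ℝ` as `b → 0⁺`.
-/

open Filter Topology Set

/-- The space of closed subgroups of `ℝ` with the Chabauty topology. -/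
def CsubR : Type := {A : Set ℝ // IsClosed A ∧ ∃ H : AddSubgroup ℝ, A = (H : Set ℝ)}

instance : TopologicalSpace CsubR :=
  TopologicalSpace.induced Subtype.val (ChabautyFell ℝ)

open Metric

attribute [local instance] ChabautyFell

section ChabautyFell

variable {X : Type*} [TopologicalSpace X]

theorem tendsto_chabautyFell_iff {α : Type*} {l : Filter α} {f : α → Set X} {A : Set X} :
    Tendsto f l (𝓝 A) ↔
      (∀ K, IsCompact K → A ∩ K = ∅ → ∀ᶠ t in l, f t ∩ K = ∅) ∧
        ∀ U, IsOpen U → (A ∩ U).Nonempty → ∀ᶠ t in l, (f t ∩ U).Nonempty := by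
  rw [ChabautyFell, TopologicalSpace.tendsto_nhds_generateFrom_iff]
  constructor
  · intro h
    exact ⟨fun K hK hAK => h _ (Or.inl ⟨K, hK, rfl⟩) hAK,
      fun U hU hAU => h _ (Or.inr ⟨U, hU, rfl⟩) hAU⟩
  · rintro ⟨hK, hU⟩ S (⟨K, hKc, rfl⟩ | ⟨U, hUo, rfl⟩) hAS
    exacts [hK K hKc hAS, hU U hUo hAS]

theorem disjoint_nhds_chabautyFell [LocallyCompactSpace X] {A B : Set X} (hB : IsClosed B)
    (hAB : ¬A ⊆ B) : Disjoint (𝓝 A) (𝓝 B) := by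
  obtain ⟨x, hxA, hxB⟩ := not_subset.1 hAB
  obtain ⟨K, hK, hxK, hKB⟩ := exists_compact_subset hB.isOpen_compl hxB
  have hmeets : {C : Set X | (C ∩ interior K).Nonempty} ∈ 𝓝 A :=
    (TopologicalSpace.isOpen_generateFrom_of_mem (Or.inr ⟨_, isOpen_interior, rfl⟩)).mem_nhds
      ⟨x, hxA, hxK⟩
  have hmisses : {C : Set X | C ∩ K = ∅} ∈ 𝓝 B :=
    (TopologicalSpace.isOpen_generateFrom_of_mem (Or.inl ⟨K, hK, rfl⟩)).mem_nhds
      (disjoint_iff_inter_eq_empty.1 (subset_compl_iff_disjoint_left.1 hKB))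
  refine disjoint_of_disjoint_of_mem (disjoint_left.2 ?_) hmeets hmisses
  rintro C ⟨y, hyC, hyK⟩ hCK
  exact (eq_empty_iff_forall_notMem.1 hCK) y ⟨hyC, interior_subset hyK⟩

end ChabautyFell

instance : T2Space CsubR := by
  refine t2Space_iff_disjoint_nhds.2 fun A B hAB => ?_
  have hnhds (C : CsubR) : 𝓝 C = comap Subtype.val (𝓝 C.1) := nhds_induced _ _
  show Disjoint (𝓝 A) (𝓝 B)
  rw [hnhds, hnhds]
  apply disjoint_comap
  by_cases hsub : A.1 ⊆ B.1
  · exact (disjoint_nhds_chabautyFell A.2.1 fun h => hAB (Subtype.ext (hsub.antisymm h))).symm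
  · exact disjoint_nhds_chabautyFell B.2.1 hsub

theorem isClosed_range_mul_int (a : ℝ) : IsClosed (range fun k : ℤ => a * (k : ℝ)) :=
  ((isClosedMap_smul₀ a).comp Int.isClosedEmbedding_coe_real.isClosedMap).isClosed_range

theorem range_mul_int_eq_zmultiples (a : ℝ) :
    (range fun k : ℤ => a * (k : ℝ)) = AddSubgroup.zmultiples a := by
  simp [AddSubgroup.coe_zmultiples, mul_comm]

theorem range_mul_int_ne_univ (a : ℝ) : (range fun k : ℤ => a * (k : ℝ)) ≠ univ :=
  fun h => not_countable_univ (h ▸ countable_range _)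

theorem range_mul_int_injOn : InjOn (fun a : ℝ => range fun k : ℤ => a * (k : ℝ)) (Ici 0) := by
  intro a ha b hb hab
  simp only [range_mul_int_eq_zmultiples, SetLike.coe_set_eq] at hab
  rcases eq_or_ne a 0 with rfl | ha0
  · have hb0 : b ∈ AddSubgroup.zmultiples (0 : ℝ) := hab ▸ AddSubgroup.mem_zmultiples b
    exact (by simpa using hb0 : b = 0).symm
  · rcases (AddSubgroup.zmultiples_eq_zmultiples_iff
      (not_isOfFinAddOrder_of_isAddTorsionFree ha0)).1 hab with h | h
    · exact h
    · exact absurd (by linarith [mem_Ici.1 ha, mem_Ici.1 hb] : a = 0) ha0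

theorem AddSubgroup.coe_eq_zero_or_univ_or_range_mul_int_of_isClosed (H : AddSubgroup ℝ)
    (hH : IsClosed (H : Set ℝ)) :
    (H : Set ℝ) = {0} ∨ (H : Set ℝ) = univ ∨
      ∃ a : ℝ, 0 < a ∧ (H : Set ℝ) = range fun k : ℤ => a * (k : ℝ) := by
  rcases H.dense_or_cyclic with hd | ⟨a, rfl⟩
  · exact Or.inr (Or.inl (by rw [← hH.closure_eq, hd.closure_eq]))
  rw [← AddSubgroup.zmultiples_eq_closure]
  rcases lt_trichotomy a 0 with ha | rfl | ha
  · refine Or.inr (Or.inr ⟨-a, neg_pos.2 ha, ?_⟩)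
    rw [range_mul_int_eq_zmultiples, AddSubgroup.zmultiples_neg]
  · simp
  · exact Or.inr (Or.inr ⟨a, ha, (range_mul_int_eq_zmultiples a).symm⟩)

theorem exists_int_dist_mul_lt {a : ℝ} (ha : 0 < a) (x : ℝ) : ∃ k : ℤ, dist (a * k) x < a := by
  refine ⟨⌊x / a⌋, ?_⟩
  have hle : (⌊x / a⌋ : ℝ) * a ≤ x := (le_div_iff₀ ha).1 (Int.floor_le _)
  have hlt : x < (⌊x / a⌋ + 1) * a := (div_lt_iff₀ ha).1 (Int.lt_floor_add_one _)
  rw [Real.dist_eq, abs_sub_lt_iff]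
  constructor <;> linarith

theorem range_mul_int_inter_ball_subset {a r : ℝ} (hr : r ≤ |a|) :
    (range fun k : ℤ => a * (k : ℝ)) ∩ ball 0 r ⊆ {0} := by
  rintro _ ⟨⟨k, rfl⟩, hk⟩
  rw [mem_ball_zero_iff, Real.norm_eq_abs, abs_mul] at hk
  obtain rfl : k = 0 := by
    by_contra hk0
    have : (1 : ℝ) ≤ |(k : ℝ)| := by exact_mod_cast Int.one_le_abs hk0
    nlinarith [abs_nonneg a]
  simp

theorem tendsto_range_mul_int_nhdsGT_zero :
    Tendsto (fun a : ℝ => range fun k : ℤ => a * (k : ℝ)) (𝓝[>] 0) (𝓝 univ) := by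
  refine tendsto_chabautyFell_iff.2 ⟨fun K _ hK => ?_, fun U hU ⟨x, _, hxU⟩ => ?_⟩
  · rw [univ_inter] at hK
    simp [hK]
  · obtain ⟨δ, hδ, hball⟩ := Metric.isOpen_iff.1 hU x hxU
    filter_upwards [Ioo_mem_nhdsGT hδ] with a ha
    obtain ⟨k, hk⟩ := exists_int_dist_mul_lt ha.1 x
    exact ⟨a * k, mem_range_self k, hball (hk.trans ha.2)⟩

theorem tendsto_range_mul_int_cobounded :
    Tendsto (fun a : ℝ => range fun k : ℤ => a * (k : ℝ)) (Bornology.cobounded ℝ) (𝓝 {0}) := by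
  refine tendsto_chabautyFell_iff.2 ⟨fun K hK h0K => ?_, fun U _ h0U => ?_⟩
  · obtain ⟨r, hKr⟩ := hK.isBounded.subset_ball 0
    filter_upwards [tendsto_norm_cobounded_atTop.eventually_ge_atTop r] with a ha
    refine eq_empty_of_forall_notMem fun x ⟨hxa, hxK⟩ => ?_
    have hx0 : x = 0 := range_mul_int_inter_ball_subset ha ⟨hxa, hKr hxK⟩
    exact (eq_empty_iff_forall_notMem.1 h0K) x ⟨hx0, hxK⟩
  · obtain ⟨_, rfl, h0⟩ := h0U
    exact Eventually.of_forall fun a => ⟨0, ⟨0, by simp⟩, h0⟩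

theorem tendsto_range_mul_int_nhds {a : ℝ} (ha : a ≠ 0) :
    Tendsto (fun b : ℝ => range fun k : ℤ => b * (k : ℝ)) (𝓝 a)
      (𝓝 (range fun k : ℤ => a * (k : ℝ))) := by
  refine tendsto_chabautyFell_iff.2 ⟨fun K hK haK => ?_, fun U hU ⟨_, ⟨k, rfl⟩, hkU⟩ => ?_⟩
  · -- `x ∈ bℤ` iff `x / b ∈ ℤ`, and the tube lemma makes `x / b ∉ ℤ` uniform over `x ∈ K`
    have hfar : ∀ x ∈ K, ∀ᶠ p : ℝ × ℝ in 𝓝 (a, x), p.2 / p.1 ∉ range ((↑) : ℤ → ℝ) := by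
      intro x hx
      have hxa : x / a ∉ range ((↑) : ℤ → ℝ) := by
        rintro ⟨k, hk⟩
        refine (eq_empty_iff_forall_notMem.1 haK) x ⟨⟨k, ?_⟩, hx⟩
        show a * k = x
        rw [hk, mul_div_cancel₀ _ ha]
      have hcont : ContinuousAt (fun p : ℝ × ℝ => p.2 / p.1) (a, x) := by
        fun_prop (disch := exact ha)
      exact hcont.eventually_mem
        (Int.isClosedEmbedding_coe_real.isClosed_range.isOpen_compl.mem_nhds hxa)
    filter_upwards [hK.eventually_forall_of_forall_eventually
      (P := fun b y => y / b ∉ range ((↑) : ℤ → ℝ)) hfar, eventually_ne_nhds ha]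
      with b hb hb0
    refine eq_empty_of_forall_notMem fun _ ⟨⟨k, hk⟩, hkK⟩ => hb _ hkK ⟨k, ?_⟩
    rw [← hk, mul_div_cancel_left₀ _ hb0]
  · filter_upwards [((continuous_mul_const (k : ℝ)).tendsto a).eventually (hU.mem_nhds hkU)]
      with b hb
    exact ⟨_, mem_range_self k, hb⟩

theorem continuous_range_inv_mul_int :
    Continuous fun a : ℝ => range fun k : ℤ => a⁻¹ * (k : ℝ) := by
  refine continuous_iff_continuousAt.2 fun a => ?_
  rcases eq_or_ne a 0 with rfl | ha
  · rw [ContinuousAt, ← nhdsNE_sup_pure, tendsto_sup]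
    refine ⟨?_, tendsto_pure_nhds _ _⟩
    rw [inv_zero, show (range fun k : ℤ => (0 : ℝ) * k) = {0} by simp]
    exact tendsto_range_mul_int_cobounded.comp tendsto_inv₀_nhdsNE_zero
  · exact (tendsto_range_mul_int_nhds (inv_ne_zero ha)).comp (continuousAt_inv₀ ha)

/-- Through the junk value `1 / 0 = 0`, `t = 0` is sent to `0ℤ = {0}`. -/
noncomputable def subgroupOfParam (t : ℝ) : Set ℝ :=
  if t < 1 then range fun k : ℤ => (1 - t) / t * (k : ℝ) else univ

theorem continuousOn_subgroupOfParam_Iio : ContinuousOn subgroupOfParam (Iio 1) := by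
  have heq : EqOn (fun t : ℝ => range fun k : ℤ => (t / (1 - t))⁻¹ * (k : ℝ)) subgroupOfParam
      (Iio 1) := fun t ht => by simp [subgroupOfParam, mem_Iio.1 ht, inv_div]
  refine ContinuousOn.congr ?_ heq.symm
  exact continuous_range_inv_mul_int.comp_continuousOn
    (continuousOn_id.div (continuousOn_const.sub continuousOn_id) fun t ht => (sub_pos.2 ht).ne')

theorem continuousWithinAt_subgroupOfParam_one :
    ContinuousWithinAt subgroupOfParam (Iic 1) 1 := by
  have hpos : Tendsto (fun t : ℝ => (1 - t) / t) (𝓝[<] 1) (𝓝[>] 0) := by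
    refine tendsto_nhdsWithin_iff.2 ⟨?_, ?_⟩
    · have : ContinuousAt (fun t : ℝ => (1 - t) / t) 1 := by fun_prop (disch := norm_num)
      simpa using this.tendsto.mono_left nhdsWithin_le_nhds
    · filter_upwards [Ioo_mem_nhdsLT one_pos] with t ht
      exact div_pos (sub_pos.2 ht.2) ht.1
  rw [← continuousWithinAt_Iio_iff_Iic, ContinuousWithinAt,
    show subgroupOfParam 1 = univ from if_neg (lt_irrefl 1)]
  refine (tendsto_range_mul_int_nhdsGT_zero.comp hpos).congr' ?_
  filter_upwards [self_mem_nhdsWithin] with t ht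
  simp [subgroupOfParam, mem_Iio.1 ht]

theorem continuousOn_subgroupOfParam : ContinuousOn subgroupOfParam (Icc 0 1) := by
  intro t ht
  rcases ht.2.lt_or_eq with h | rfl
  · exact (continuousOn_subgroupOfParam_Iio.continuousAt (Iio_mem_nhds h)).continuousWithinAt
  · exact continuousWithinAt_subgroupOfParam_one.mono Icc_subset_Iic_self

theorem isClosedAddSubgroup_subgroupOfParam (t : ℝ) :
    IsClosed (subgroupOfParam t) ∧ ∃ H : AddSubgroup ℝ, subgroupOfParam t = H := by
  unfold subgroupOfParam
  split_ifs
  · exact ⟨isClosed_range_mul_int _, _, range_mul_int_eq_zmultiples _⟩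
  · exact ⟨isClosed_univ, ⊤, AddSubgroup.coe_top.symm⟩

theorem injOn_subgroupOfParam : InjOn subgroupOfParam (Icc 0 1) := by
  intro t ht s hs hts
  rcases ht.2.lt_or_eq with ht1 | rfl <;> rcases hs.2.lt_or_eq with hs1 | rfl
  · simp only [subgroupOfParam, if_pos ht1, if_pos hs1] at hts
    have := range_mul_int_injOn (div_nonneg (sub_nonneg.2 ht.2) ht.1)
      (div_nonneg (sub_nonneg.2 hs.2) hs.1) hts
    rw [← inv_div t, ← inv_div s, inv_inj, div_eq_div_iff (sub_pos.2 ht1).ne' (sub_pos.2 hs1).ne']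
      at this
    linarith
  · simp [subgroupOfParam, ht1, range_mul_int_ne_univ] at hts
  · simp [subgroupOfParam, hs1, (range_mul_int_ne_univ _).symm] at hts
  · rfl

theorem exists_subgroupOfParam_eq (H : AddSubgroup ℝ) (hH : IsClosed (H : Set ℝ)) :
    ∃ t ∈ Icc (0 : ℝ) 1, subgroupOfParam t = H := by
  rcases H.coe_eq_zero_or_univ_or_range_mul_int_of_isClosed hH with h | h | ⟨a, ha, h⟩ <;> rw [h]
  · exact ⟨0, left_mem_Icc.2 zero_le_one, by simp [subgroupOfParam]⟩
  · exact ⟨1, right_mem_Icc.2 zero_le_one, by simp [subgroupOfParam]⟩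
  · have ht : (1 + a)⁻¹ < 1 := inv_lt_one_of_one_lt₀ (by linarith)
    have hinv : (1 - (1 + a)⁻¹) / (1 + a)⁻¹ = a := by field_simp; ring
    exact ⟨(1 + a)⁻¹, ⟨by positivity, ht.le⟩, by simp only [subgroupOfParam, if_pos ht, hinv]⟩

noncomputable def CsubR.ofParam (t : Icc (0 : ℝ) 1) : CsubR :=
  ⟨subgroupOfParam t, isClosedAddSubgroup_subgroupOfParam t⟩

theorem CsubR.bijective_ofParam : Function.Bijective CsubR.ofParam := by
  refine ⟨fun t s h => Subtype.ext (injOn_subgroupOfParam t.2 s.2 (congrArg Subtype.val h)), ?_⟩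
  rintro ⟨A, hA, H, rfl⟩
  obtain ⟨t, ht, hHt⟩ := exists_subgroupOfParam_eq H hA
  exact ⟨⟨t, ht⟩, Subtype.ext hHt⟩

theorem CsubR.continuous_ofParam : Continuous CsubR.ofParam :=
  continuous_induced_rng.2 continuousOn_subgroupOfParam.domRestrict

/-- the Chabauty space of closed subgroups of `ℝ` is homeomorphic to a
closed interval; it consists of `{0}`, the groups `aℤ` (`a > 0`) and `ℝ`, with
`aℤ → ℝ` as `a → 0⁺` and `aℤ → {0}` as `a → +∞`. -/
theorem stmt19 :
    (∀ H : AddSubgroup ℝ, IsClosed (H : Set ℝ) →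
      (H : Set ℝ) = {0} ∨ (H : Set ℝ) = Set.univ ∨
        ∃ a : ℝ, 0 < a ∧ (H : Set ℝ) = Set.range fun k : ℤ => a * (k : ℝ)) ∧
    Nonempty (CsubR ≃ₜ (Set.Icc (0 : ℝ) 1)) ∧
    Tendsto (fun a : ℝ => Set.range fun k : ℤ => a * (k : ℝ))
      (nhdsWithin 0 (Set.Ioi 0)) (@nhds _ (ChabautyFell ℝ) (Set.univ : Set ℝ)) ∧
    Tendsto (fun a : ℝ => Set.range fun k : ℤ => a * (k : ℝ))
      atTop (@nhds _ (ChabautyFell ℝ) ({0} : Set ℝ)) :=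
  ⟨AddSubgroup.coe_eq_zero_or_univ_or_range_mul_int_of_isClosed,
    ⟨(CsubR.continuous_ofParam.homeoOfEquivCompactToT2
      (f := Equiv.ofBijective _ CsubR.bijective_ofParam)).symm⟩,
    tendsto_range_mul_int_nhdsGT_zero,
    tendsto_range_mul_int_cobounded.mono_left IsOrderBornology.atTop_le_cobounded⟩
end
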